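/- arXiv:0911.2605 — 4 statements merged into one kernel-verified Lean document; each statement's English description precedes it below -/
import Mathlib

section
/- For 0 ≤ t ≤ T, T > 0, p > 1, β > 0, and all real ξ, the kernel A(ξ,t) = e^{-tξ²}/(β e^{(p-1)Tξ²} + e^{-Tξ²}) satisfies A(ξ,t) ≤ β^{(t-T)/(pT)}. -/
/-!
Multiplying numerator and denominator by `e^{Tξ²}` and writing `x = e^{pTξ²}`,
`s = (T - t)/(pT) ∈ [0, 1]`, the kernel becomes `x^s / (1 + βx) = β^{-s} (βx)^s / (1 + βx)`,
and `y^s ≤ max 1 y ≤ 1 + y` for `y ≥ 0`.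
-/

open Real

theorem Real.rpow_le_one_add {y s : ℝ} (hy : 0 ≤ y) (hs0 : 0 ≤ s) (hs1 : s ≤ 1) :
    y ^ s ≤ 1 + y := by
  rcases le_total y 1 with hy1 | hy1
  · linarith [rpow_le_one hy hy1 hs0]
  · linarith [rpow_le_self_of_one_le hy1 hs1]

theorem Real.rpow_div_one_add_mul_le {β x s : ℝ} (hβ : 0 < β) (hx : 0 ≤ x)
    (hs0 : 0 ≤ s) (hs1 : s ≤ 1) : x ^ s / (1 + β * x) ≤ β ^ (-s) := by
  have hβs : 0 < β ^ s := rpow_pos_of_pos hβ s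
  rw [rpow_neg hβ.le, div_le_iff₀ (by positivity), inv_mul_eq_div, le_div_iff₀ hβs, mul_comm,
    ← mul_rpow hβ.le hx]
  exact rpow_le_one_add (by positivity) hs0 hs1

theorem kernel_A_eq_rpow_div_one_add_mul (T p β t ξ : ℝ) (hpT : p * T ≠ 0) :
    exp (-t * ξ ^ 2) / (β * exp ((p - 1) * T * ξ ^ 2) + exp (-T * ξ ^ 2)) =
      exp (p * T * ξ ^ 2) ^ ((T - t) / (p * T)) / (1 + β * exp (p * T * ξ ^ 2)) := by
  have hexp : p * T * ξ ^ 2 * ((T - t) / (p * T)) = -t * ξ ^ 2 + T * ξ ^ 2 := by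
    rw [mul_right_comm, mul_div_cancel₀ _ hpT]; ring
  have hpow : p * T * ξ ^ 2 = (p - 1) * T * ξ ^ 2 + T * ξ ^ 2 := by ring
  have hinv : exp (-T * ξ ^ 2) * exp (T * ξ ^ 2) = 1 := by
    rw [← exp_add, neg_mul, neg_add_cancel, exp_zero]
  have hden : 1 + β * (exp ((p - 1) * T * ξ ^ 2) * exp (T * ξ ^ 2)) =
      (β * exp ((p - 1) * T * ξ ^ 2) + exp (-T * ξ ^ 2)) * exp (T * ξ ^ 2) := by
    linear_combination -hinv
  rw [← exp_mul, hexp, hpow, exp_add, exp_add, hden, mul_div_mul_right _ _ (exp_pos _).ne']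

theorem kernel_A_bound (T p β t ξ : ℝ) (hT : 0 < T) (hp : 1 < p) (hβ : 0 < β)
    (ht0 : 0 ≤ t) (htT : t ≤ T) :
    Real.exp (-t * ξ ^ 2) / (β * Real.exp ((p - 1) * T * ξ ^ 2) + Real.exp (-T * ξ ^ 2)) ≤
      β ^ ((t - T) / (p * T)) := by
  have hpT : 0 < p * T := by positivity
  have hs0 : 0 ≤ (T - t) / (p * T) := div_nonneg (by linarith) hpT.le
  have hs1 : (T - t) / (p * T) ≤ 1 := by rw [div_le_one hpT]; nlinarith
  rw [kernel_A_eq_rpow_div_one_add_mul T p β t ξ hpT.ne',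
    show (t - T) / (p * T) = -((T - t) / (p * T)) by ring]
  exact rpow_div_one_add_mul_le hβ (exp_pos _).le hs0 hs1
end

section
/- For 0 ≤ t ≤ s ≤ T, T > 0, p > 1, β > 0, and all real ξ, the kernel B(ξ,s,t) = e^{(s-t-T)ξ²}/(β e^{(p-1)Tξ²} + e^{-Tξ²}) satisfies B(ξ,s,t) ≤ β^{(t-s)/(pT)}. -/
/-! With `z = β e^{pTξ²}` the kernel simplifies to `B = e^{(s-t)ξ²} / (1 + z)`, and for the exponent
`a = (s - t)/(pT) ∈ [0, 1]` its numerator is `β^{-a} z^a`. The bound is then `z^a ≤ 1 + z`. -/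

open Real

lemma Real.rpow_le_one_add_s3 {z a : ℝ} (hz : 0 ≤ z) (ha₀ : 0 ≤ a) (ha₁ : a ≤ 1) :
    z ^ a ≤ 1 + z := by
  rcases le_total z 1 with h | h
  · linarith [rpow_le_one hz h ha₀]
  · linarith [rpow_le_self_of_one_le h ha₁]

lemma exp_mul_div_one_add_le_rpow_neg {β a y : ℝ} (hβ : 0 < β) (ha₀ : 0 ≤ a) (ha₁ : a ≤ 1) :
    exp (a * y) / (1 + β * exp y) ≤ β ^ (-a) := by
  have hpow : (β * exp y) ^ a = β ^ a * exp (a * y) := by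
    rw [mul_rpow hβ.le (exp_pos y).le, ← exp_mul, mul_comm y]
  have hβa : 0 < β ^ a := rpow_pos_of_pos hβ a
  rw [div_le_iff₀ (by positivity), rpow_neg hβ.le, inv_mul_eq_div, le_div_iff₀ hβa, mul_comm]
  exact hpow ▸ rpow_le_one_add_s3 (by positivity) ha₀ ha₁

lemma kernel_eq_exp_div_one_add (β c p T x : ℝ) :
    exp (c - T * x) / (β * exp ((p - 1) * T * x) + exp (-T * x)) =
      exp c / (1 + β * exp (p * T * x)) := by
  have hfactor : β * exp ((p - 1) * T * x) + exp (-T * x) =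
      (1 + β * exp (p * T * x)) * exp (-T * x) := by
    rw [add_mul, one_mul, mul_assoc β, ← exp_add]
    ring_nf
  rw [hfactor, sub_eq_add_neg, exp_add, neg_mul, mul_div_mul_right _ _ (exp_pos _).ne']

theorem kernel_B_bound (T p β t s ξ : ℝ) (hT : 0 < T) (hp : 1 < p) (hβ : 0 < β)
    (ht0 : 0 ≤ t) (hts : t ≤ s) (hsT : s ≤ T) :
    Real.exp ((s - t - T) * ξ ^ 2) / (β * Real.exp ((p - 1) * T * ξ ^ 2) + Real.exp (-T * ξ ^ 2)) ≤
      β ^ ((t - s) / (p * T)) := by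
  have hpT : 0 < p * T := by positivity
  set a := (s - t) / (p * T)
  have ha₀ : 0 ≤ a := div_nonneg (by linarith) hpT.le
  have ha₁ : a ≤ 1 := (div_le_one hpT).2 (by nlinarith)
  have hnum : (s - t - T) * ξ ^ 2 = a * (p * T * ξ ^ 2) - T * ξ ^ 2 := by
    simp only [a]
    field_simp
  rw [hnum, kernel_eq_exp_div_one_add, show (t - s) / (p * T) = -a by simp only [a]; ring]
  exact exp_mul_div_one_add_le_rpow_neg hβ ha₀ ha₁
end

section
/- Let T > 0, p > 1, 0 < β ≤ 1, 0 ≤ t ≤ T. Suppose u is such that û(ξ,t) = e^{(T-t)ξ²} φ̂(ξ) with φ ∈ L²(ℝ), û(·,0) ∈ L²(ℝ), and ‖u(·,0)‖_{L²} ≤ E₁. If ŵ(ξ,t) = [e^{-tξ²}/(β e^{(p-1)Tξ²} + e^{-Tξ²})] φ̂(ξ), then ‖u(·,t) − w(·,t)‖_{L²} ≤ β^{t/(pT)} E₁. -/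
open Real MeasureTheory

/-!
On the Fourier side `u(t) - w(t)` is `φ̂` times the multiplier
`e^{(T-t)s} - e^{-ts} / (β e^{(p-1)Ts} + e^{-Ts}) = e^{Ts} · β x^{1-θ} / (β x + 1)`, where `s = ξ²`,
`x = e^{pTs}` and `θ = t / (pT) ∈ [0, 1]`. Since `(βx)^{1-θ} ≤ βx + 1`, the second factor is at most
`β^θ`, so `‖u(t) - w(t)‖ ≤ β^θ ‖u(0)‖ ≤ β^θ E₁`.
-/

lemma rpow_le_add_one {y a : ℝ} (hy : 0 ≤ y) (ha0 : 0 ≤ a) (ha1 : a ≤ 1) : y ^ a ≤ y + 1 :=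
  calc y ^ a ≤ (y + 1) ^ a := rpow_le_rpow hy (by linarith) ha0
    _ ≤ (y + 1) ^ (1 : ℝ) := rpow_le_rpow_of_exponent_le (by linarith) ha1
    _ = y + 1 := rpow_one _

lemma mul_rpow_one_sub_le {β x θ : ℝ} (hβ : 0 < β) (hx : 0 ≤ x) (hθ0 : 0 ≤ θ) (hθ1 : θ ≤ 1) :
    β * x ^ (1 - θ) ≤ β ^ θ * (β * x + 1) := by
  have hsplit : β * x ^ (1 - θ) = β ^ θ * (β * x) ^ (1 - θ) := by
    rw [mul_rpow hβ.le hx, ← mul_assoc, ← rpow_add hβ, add_sub_cancel, rpow_one]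
  rw [hsplit]
  gcongr
  exact rpow_le_add_one (by positivity) (by linarith) (by linarith)

lemma exp_sub_exp_div_eq (T p β t s : ℝ) (hβ : 0 ≤ β) :
    exp ((T - t) * s) - exp (-t * s) / (β * exp ((p - 1) * T * s) + exp (-T * s))
      = exp (T * s) * (β * exp ((p * T - t) * s) / (β * exp (p * T * s) + 1)) := by
  have h₁ : exp ((T - t) * s) = exp (T * s) / exp (t * s) := by rw [← exp_sub]; ring_nf
  have h₂ : exp (-t * s) = 1 / exp (t * s) := by rw [one_div, ← exp_neg]; ring_nf
  have h₃ : exp ((p - 1) * T * s) = exp (p * T * s) / exp (T * s) := by rw [← exp_sub]; ring_nf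
  have h₄ : exp (-T * s) = 1 / exp (T * s) := by rw [one_div, ← exp_neg]; ring_nf
  have h₅ : exp ((p * T - t) * s) = exp (p * T * s) / exp (t * s) := by rw [← exp_sub]; ring_nf
  rw [h₁, h₂, h₃, h₄, h₅]
  field_simp
  ring

lemma abs_exp_sub_exp_div_le {T p β t s : ℝ} (hβ : 0 < β) (hpT : 0 < p * T) (ht0 : 0 ≤ t)
    (htpT : t ≤ p * T) :
    |exp ((T - t) * s) - exp (-t * s) / (β * exp ((p - 1) * T * s) + exp (-T * s))|
      ≤ β ^ (t / (p * T)) * exp (T * s) := by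
  set θ := t / (p * T)
  have hθ0 : 0 ≤ θ := by positivity
  have hθ1 : θ ≤ 1 := (div_le_one hpT).2 htpT
  have hx : exp ((p * T - t) * s) = exp (p * T * s) ^ (1 - θ) := by
    rw [← exp_mul]; congr 1; simp only [θ]; linear_combination s * mul_div_cancel₀ t hpT.ne'
  rw [exp_sub_exp_div_eq T p β t s hβ.le, hx, abs_of_nonneg (by positivity), mul_comm]
  gcongr
  rw [div_le_iff₀ (by positivity)]
  exact mul_rpow_one_sub_le hβ (exp_pos _).le hθ0 hθ1

theorem approximation_error_general (T p β t E₁ : ℝ) (hT : 0 < T) (hp : 1 < p)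
    (hβ0 : 0 < β) (ht0 : 0 ≤ t) (htT : t ≤ T)
    (φh : ℝ → ℂ)
    (hE : eLpNorm (fun ξ : ℝ => (Real.exp (T * ξ ^ 2) : ℂ) * φh ξ) 2 volume
            ≤ ENNReal.ofReal E₁) :
    eLpNorm
      (fun ξ : ℝ =>
        (Real.exp ((T - t) * ξ ^ 2) : ℂ) * φh ξ -
        (Real.exp (-t * ξ ^ 2) /
            (β * Real.exp ((p - 1) * T * ξ ^ 2) + Real.exp (-T * ξ ^ 2)) : ℂ) * φh ξ)
      2 volume
      ≤ ENNReal.ofReal (β ^ (t / (p * T)) * E₁) := by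
  have hpT : 0 < p * T := by positivity
  have hmultiplier (ξ : ℝ) :
      ‖(Real.exp ((T - t) * ξ ^ 2) : ℂ) * φh ξ -
        (Real.exp (-t * ξ ^ 2) /
            (β * Real.exp ((p - 1) * T * ξ ^ 2) + Real.exp (-T * ξ ^ 2)) : ℂ) * φh ξ‖
      ≤ β ^ (t / (p * T)) * ‖(Real.exp (T * ξ ^ 2) : ℂ) * φh ξ‖ := by
    rw [← sub_mul, norm_mul, norm_mul, ← mul_assoc]
    gcongr
    norm_cast
    rw [norm_eq_abs, norm_of_nonneg (exp_pos _).le]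
    exact abs_exp_sub_exp_div_le hβ0 hpT ht0 (htT.trans (le_mul_of_one_le_left hT.le hp.le))
  calc _ ≤ ENNReal.ofReal (β ^ (t / (p * T))) *
        eLpNorm (fun ξ : ℝ => (Real.exp (T * ξ ^ 2) : ℂ) * φh ξ) 2 volume :=
        eLpNorm_le_mul_eLpNorm_of_ae_le_mul (ae_of_all _ hmultiplier) 2
    _ ≤ ENNReal.ofReal (β ^ (t / (p * T))) * ENNReal.ofReal E₁ := by gcongr
    _ = _ := (ENNReal.ofReal_mul (by positivity)).symm

/-- If the exact solution satisfies `û(ξ,t) = e^{(T-t)ξ²} φ̂(ξ)` with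
`û(·,0) = e^{Tξ²}φ̂ ∈ L²` and `‖u(·,0)‖ ≤ E₁`, then the regularized solution
`ŵ(ξ,t) = A(ξ,t)φ̂(ξ)` satisfies `‖u(·,t) − w(·,t)‖ ≤ β^{t/(pT)} E₁` (Plancherel). -/
theorem approximation_error (T p β t E₁ : ℝ) (hT : 0 < T) (hp : 1 < p)
    (hβ0 : 0 < β) (hβ1 : β ≤ 1) (ht0 : 0 ≤ t) (htT : t ≤ T)
    (φh : ℝ → ℂ) (hφ : MemLp φh 2 volume)
    (hu0 : MemLp (fun ξ : ℝ => (Real.exp (T * ξ ^ 2) : ℂ) * φh ξ) 2 volume)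
    (hE : eLpNorm (fun ξ : ℝ => (Real.exp (T * ξ ^ 2) : ℂ) * φh ξ) 2 volume
            ≤ ENNReal.ofReal E₁) :
    eLpNorm
      (fun ξ : ℝ =>
        (Real.exp ((T - t) * ξ ^ 2) : ℂ) * φh ξ -
        (Real.exp (-t * ξ ^ 2) /
            (β * Real.exp ((p - 1) * T * ξ ^ 2) + Real.exp (-T * ξ ^ 2)) : ℂ) * φh ξ)
      2 volume
      ≤ ENNReal.ofReal (β ^ (t / (p * T)) * E₁) :=
  approximation_error_general T p β t E₁ hT hp hβ0 ht0 htT φh hE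
end

section
/- For β ∈ (0,1), T > 0, p > 1, 0 ≤ t ≤ T, and all real ξ, one has β e^{(pT−t)ξ²}/(1 + β e^{pTξ²}) ≤ β^{t/(pT)}. -/
/-!
Write `B = β e^{pTξ²}` and `a = t/(pT) ∈ [0, 1]`. The numerator is the weighted geometric mean
`β^a B^(1-a)`, and `B^(1-a) ≤ max 1 B ≤ 1 + B` cancels the denominator, leaving `β^a`.
-/

open Real

lemma Real.rpow_le_one_add_s8 {x a : ℝ} (hx : 0 ≤ x) (ha0 : 0 ≤ a) (ha1 : a ≤ 1) :
    x ^ a ≤ 1 + x := by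
  rcases le_total x 1 with hx1 | hx1
  · linarith [rpow_le_one hx hx1 ha0]
  · linarith [rpow_le_self_of_one_le hx1 ha1]

lemma Real.mul_exp_one_sub_mul_eq {b : ℝ} (hb : 0 < b) (a s : ℝ) :
    b * exp ((1 - a) * s) = b ^ a * (b * exp s) ^ (1 - a) := by
  rw [mul_rpow hb.le (exp_pos s).le, ← exp_mul, ← mul_assoc, ← rpow_add hb, add_sub_cancel,
    rpow_one, mul_comm s]

lemma Real.mul_exp_one_sub_mul_div_one_add_le {b a : ℝ} (hb : 0 < b) (ha0 : 0 ≤ a) (ha1 : a ≤ 1)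
    (s : ℝ) : b * exp ((1 - a) * s) / (1 + b * exp s) ≤ b ^ a := by
  have hB : 0 < b * exp s := by positivity
  rw [div_le_iff₀ (by linarith), mul_exp_one_sub_mul_eq hb]
  exact mul_le_mul_of_nonneg_left (rpow_le_one_add_s8 hB.le (by linarith) (by linarith))
    (rpow_nonneg hb.le a)

theorem truncation_kernel_bound_general (T p β t ξ : ℝ) (hT : 0 < T) (hp : 1 < p)
    (hβ0 : 0 < β) (ht0 : 0 ≤ t) (htT : t ≤ T) :
    β * Real.exp ((p * T - t) * ξ ^ 2) / (1 + β * Real.exp (p * T * ξ ^ 2)) ≤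
      β ^ (t / (p * T)) := by
  have hpT : 0 < p * T := by positivity
  have ha1 : t / (p * T) ≤ 1 := (div_le_one hpT).2 (by nlinarith)
  have hexp : (p * T - t) * ξ ^ 2 = (1 - t / (p * T)) * (p * T * ξ ^ 2) := by
    field_simp
  rw [hexp]
  exact mul_exp_one_sub_mul_div_one_add_le hβ0 (div_nonneg ht0 hpT.le) ha1 _

theorem truncation_kernel_bound (T p β t ξ : ℝ) (hT : 0 < T) (hp : 1 < p)
    (hβ0 : 0 < β) (hβ1 : β < 1) (ht0 : 0 ≤ t) (htT : t ≤ T) :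
    β * Real.exp ((p * T - t) * ξ ^ 2) / (1 + β * Real.exp (p * T * ξ ^ 2)) ≤
      β ^ (t / (p * T)) :=
  truncation_kernel_bound_general T p β t ξ hT hp hβ0 ht0 htT
end
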